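/- Let α₁, β₁, γ₁, α₂, β₂, γ₂ be complex numbers and let x ∈ ℂ with x ≠ 0 and x ≠ 1. For j = 1, 2, define p_j(t) = −γ_j/t + (γ_j − 1 − α_j − β_j)/(t−1) and q_j(t) = −α_jβ_j/(t(t−1)). Suppose f_j, g_j : ℂ → ℂ and numbers s_j ∈ ℂ are such that f_j has derivative g_j(x) at x (HasDerivAt f_j (g_j x) x), g_j has derivative s_j at x, and s_j = p_j(x)·g_j(x) + q_j(x)·f_j(x) for j = 1, 2 (i.e., f_j solves the hypergeometric equation f_j'' = p_j f_j' + q_j f_j at x). Then the ℂ⁴-valued function w(t) = (f₁(t)f₂(t), t·g₁(t)f₂(t), t·f₁(t)g₂(t), t²·g₁(t)g₂(t)) has derivative at x equal to ((1/x)·H₀ + (1/(x−1))·H₁)·w(x), where H₀ = [[0,1,1,0],[0,1−γ₁,0,1],[0,0,1−γ₂,1],[0,0,0,2−γ₁−γ₂]] and H₁ = [[0,0,0,0],[−α₁β₁, γ₁−1−α₁−β₁, 0, 0],[−α₂β₂, 0, γ₂−1−α₂−β₂, 0],[0, −α₂β₂, −α₁β₁, γ₁+γ₂−2−α₁−α₂−β₁−β₂]].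 -/

import Mathlib

set_option linter.unusedVariables false

noncomputable section
open Matrix

/-- The residue matrix H₀ at x = 0. -/
def H0 (α₁ β₁ γ₁ α₂ β₂ γ₂ : ℂ) : Matrix (Fin 4) (Fin 4) ℂ :=
  !![0, 1, 1, 0;
     0, 1-γ₁, 0, 1;
     0, 0, 1-γ₂, 1;
     0, 0, 0, 2-γ₁-γ₂]

/-- The residue matrix H₁ at x = 1. -/
def H1 (α₁ β₁ γ₁ α₂ β₂ γ₂ : ℂ) : Matrix (Fin 4) (Fin 4) ℂ :=
  !![0, 0, 0, 0;
     -(α₁*β₁), γ₁-1-α₁-β₁, 0, 0;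
     -(α₂*β₂), 0, γ₂-1-α₂-β₂, 0;
     0, -(α₂*β₂), -(α₁*β₁), γ₁+γ₂-2-α₁-α₂-β₁-β₂]

/-!
The hypergeometric equation for `f` is the Fuchsian system `(u, v)' = (x⁻¹ A₀ + (x - 1)⁻¹ A₁)(u, v)`
for `u = f`, `v = x f'`, with residues `A₀ = [[0, 1], [0, 1 - γ]]` and
`A₁ = [[0, 0], [-αβ, γ - 1 - α - β]]`. The vector `w` consists of the products `uᵢ vⱼ` of the
two solution vectors, so by the Leibniz rule it satisfies the system whose residues are the
Kronecker sums `A₀⁽¹⁾ ⊕ A₀⁽²⁾ = H₀` and `A₁⁽¹⁾ ⊕ A₁⁽²⁾ = H₁`.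
-/

theorem hasDerivAt_hypergeometric_system {α β γ x s : ℂ} {f g : ℂ → ℂ} (hx0 : x ≠ 0)
    (hx1 : x ≠ 1) (hf : HasDerivAt f (g x) x) (hg : HasDerivAt g s x)
    (hs : s = (-γ/x + (γ-1-α-β)/(x-1)) * g x + (-(α*β)/(x*(x-1))) * f x) :
    HasDerivAt f (x⁻¹ * (x * g x)) x ∧
      HasDerivAt (fun t => t * g t)
        (x⁻¹ * ((1-γ) * (x * g x)) + (x-1)⁻¹ * (-(α*β) * f x + (γ-1-α-β) * (x * g x))) x := by
  refine ⟨by rwa [inv_mul_cancel_left₀ hx0], ((hasDerivAt_id' x).mul hg).congr_deriv ?_⟩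
  have hx1' : x - 1 ≠ 0 := sub_ne_zero.mpr hx1
  subst hs
  field_simp
  ring

/-- the vector w = (f₁f₂, xf₁′f₂, xf₁f₂′, x²f₁′f₂′) satisfies the
Fuchsian system of normal form w′ = ((1/x)H₀ + (1/(x−1))H₁)w. -/
theorem stmt_14 (α₁ β₁ γ₁ α₂ β₂ γ₂ : ℂ) (x : ℂ) (hx0 : x ≠ 0) (hx1 : x ≠ 1)
    (f₁ f₂ g₁ g₂ : ℂ → ℂ) (s₁ s₂ : ℂ)
    (hf₁ : HasDerivAt f₁ (g₁ x) x) (hf₂ : HasDerivAt f₂ (g₂ x) x)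
    (hg₁ : HasDerivAt g₁ s₁ x) (hg₂ : HasDerivAt g₂ s₂ x)
    (hs₁ : s₁ = (-γ₁/x + (γ₁-1-α₁-β₁)/(x-1)) * g₁ x + (-(α₁*β₁)/(x*(x-1))) * f₁ x)
    (hs₂ : s₂ = (-γ₂/x + (γ₂-1-α₂-β₂)/(x-1)) * g₂ x + (-(α₂*β₂)/(x*(x-1))) * f₂ x) :
    HasDerivAt
      (fun t : ℂ => (![f₁ t * f₂ t, t * g₁ t * f₂ t, t * f₁ t * g₂ t,
          t^2 * g₁ t * g₂ t] : Fin 4 → ℂ))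
      (Matrix.mulVec ((1/x) • H0 α₁ β₁ γ₁ α₂ β₂ γ₂ + (1/(x-1)) • H1 α₁ β₁ γ₁ α₂ β₂ γ₂)
        ![f₁ x * f₂ x, x * g₁ x * f₂ x, x * f₁ x * g₂ x, x^2 * g₁ x * g₂ x])
      x := by
  obtain ⟨hu₁, hv₁⟩ := hasDerivAt_hypergeometric_system hx0 hx1 hf₁ hg₁ hs₁
  obtain ⟨hu₂, hv₂⟩ := hasDerivAt_hypergeometric_system hx0 hx1 hf₂ hg₂ hs₂
  have hw : (fun t : ℂ => (![f₁ t * f₂ t, t * g₁ t * f₂ t, t * f₁ t * g₂ t,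
      t^2 * g₁ t * g₂ t] : Fin 4 → ℂ)) = fun t => ![f₁ t * f₂ t, t * g₁ t * f₂ t,
      f₁ t * (t * g₂ t), t * g₁ t * (t * g₂ t)] := by
    ring_nf
  rw [hw, hasDerivAt_pi]
  intro i
  fin_cases i <;> [refine (hu₁.mul hu₂).congr_deriv ?_; refine (hv₁.mul hu₂).congr_deriv ?_;
    refine (hu₁.mul hv₂).congr_deriv ?_; refine (hv₁.mul hv₂).congr_deriv ?_] <;>
  · simp only [mulVec, dotProduct, Fin.sum_univ_four, H0, H1, Matrix.add_apply, Matrix.smul_apply,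
      of_apply, cons_val, cons_val_zero, cons_val_one, smul_eq_mul, Fin.zero_eta, Fin.mk_one,
      Fin.reduceFinMk]
    ring
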